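/- arXiv:2309.17419 — 2 statements merged into one kernel-verified Lean document; each statement's English description precedes it below -/
import Mathlib

section
/- In the split graph G of the geodetic-set construction, the set I ∪ {u} is a minimal geodetic set of G for every u ∈ U, where I = H ∪ {e*}. -/
namespace GeoConstr

/-! ## The geodetic-set construction

Given a hypergraph `ℋ` with vertex set `{v_1, …, v_n}` (encoded as `Fin n`) and edge set
`E_1, …, E_m` (encoded as `E : Fin m → Set (Fin n)`), with `n, m ≥ 1` and no vertex of `ℋ`
belonging to every edge, we build the split graph `G` of the reduction from Trans-Enum to
MinGeodetic on split graphs.  Vertex `v_i` of the paper is `GVert.v ⟨i-1⟩`, `e_j` is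
`GVert.e ⟨j-1⟩`, `u_j` is `GVert.u ⟨j-1⟩`, and `e*`, `u*` are `GVert.estar`, `GVert.ustar`. -/

inductive GVert (n m : ℕ) : Type
  | v : Fin n → GVert n m
  | e : Fin m → GVert n m
  | u : Fin m → GVert n m
  | estar : GVert n m
  | ustar : GVert n m

variable {n m : ℕ}

/-- The base (one-sided) adjacency relation of the construction; the graph is obtained by
symmetrizing it. -/
def baseRel (E : Fin m → Set (Fin n)) : GVert n m → GVert n m → Prop
  | .v _, .v _ => True            -- U ∪ V is a clique
  | .u _, .u _ => True
  | .v _, .u _ => True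
  | .v i, .e j => i ∉ E j         -- non-incidence between V and H
  | .u j, .e j' => j = j'         -- u_j is adjacent to e_j and to no other vertex of H
  | .estar, .v _ => True          -- e* is adjacent to every vertex of V
  | .ustar, .ustar => False
  | .ustar, _ => True             -- u* is adjacent to every other vertex of G
  | _, _ => False

/-- The split graph `G` of the geodetic-set construction. -/
def G (E : Fin m → Set (Fin n)) : SimpleGraph (GVert n m) :=
  SimpleGraph.fromRel (baseRel E)

/-- `z` lies on some shortest `x`–`y` path in `G`. -/
def LiesOnShortestPath {α : Type*} (G : SimpleGraph α) (x y z : α) : Prop :=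
  ∃ pth : G.Walk x y, pth.IsPath ∧ pth.length = G.dist x y ∧ z ∈ pth.support

/-- `S` is a geodetic set of `G`: every vertex is covered by some pair of vertices of `S`. -/
def IsGeodeticSet {α : Type*} (G : SimpleGraph α) (S : Set α) : Prop :=
  ∀ z : α, ∃ x ∈ S, ∃ y ∈ S, LiesOnShortestPath G x y z

/-- `S` is an inclusion-wise minimal geodetic set of `G`. -/
def IsMinimalGeodeticSet {α : Type*} (G : SimpleGraph α) (S : Set α) : Prop :=
  IsGeodeticSet G S ∧ ∀ S' : Set α, S' ⊂ S → ¬ IsGeodeticSet G S'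

/-- `T` is a transversal of the hypergraph with edges `E j`. -/
def IsTransversal (E : Fin m → Set (Fin n)) (T : Set (Fin n)) : Prop :=
  ∀ j : Fin m, (T ∩ E j).Nonempty

/-- `T` is an inclusion-wise minimal transversal of the hypergraph with edges `E j`. -/
def IsMinimalTransversal (E : Fin m → Set (Fin n)) (T : Set (Fin n)) : Prop :=
  IsTransversal E T ∧ ∀ T' : Set (Fin n), T' ⊂ T → ¬ IsTransversal E T'

/-- The independent set `I = H ∪ {e*}` of the split graph `G`. -/
def Iset : Set (GVert n m) := Set.range (GVert.e : Fin m → GVert n m) ∪ {GVert.estar}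

/-- The clique `K = U ∪ V ∪ {u*}` of the split graph `G`. -/
def Kset : Set (GVert n m) :=
  Set.range (GVert.u : Fin m → GVert n m) ∪ Set.range (GVert.v : Fin n → GVert n m) ∪
    {GVert.ustar}

/-! ### Auxiliary lemmas -/

open SimpleGraph in
/-- `u*` is adjacent to every other vertex. -/
lemma adj_ustar (E : Fin m → Set (Fin n)) {x : GVert n m} (hx : x ≠ .ustar) :
    (G E).Adj x .ustar := by
  refine (SimpleGraph.fromRel_adj ..).mpr ⟨hx, Or.inr ?_⟩
  cases x <;> simp [baseRel] at hx ⊢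

lemma reach (E : Fin m → Set (Fin n)) (x y : GVert n m) : (G E).Reachable x y := by
  by_cases h : x = y
  · exact h ▸ SimpleGraph.Reachable.refl x
  by_cases hx : x = GVert.ustar
  · subst hx
    exact ((adj_ustar E (fun h' => h h'.symm)).symm).reachable
  by_cases hy : y = GVert.ustar
  · subst hy; exact (adj_ustar E hx).reachable
  · exact ((adj_ustar E hx).reachable).trans ((adj_ustar E hy).symm).reachable

lemma dist_le_two (E : Fin m → Set (Fin n)) (x y : GVert n m) : (G E).dist x y ≤ 2 := by
  by_cases h : x = y
  · simp [h, SimpleGraph.dist_self]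
  by_cases hx : x = GVert.ustar
  · subst hx
    have := SimpleGraph.dist_le (SimpleGraph.Walk.cons
      ((adj_ustar E (fun h' => h h'.symm)).symm) SimpleGraph.Walk.nil)
    simpa using this.trans (by norm_num)
  by_cases hy : y = GVert.ustar
  · subst hy
    have := SimpleGraph.dist_le (SimpleGraph.Walk.cons (adj_ustar E hx) SimpleGraph.Walk.nil)
    simpa using this.trans (by norm_num)
  · have := SimpleGraph.dist_le (SimpleGraph.Walk.cons (adj_ustar E hx)
      (SimpleGraph.Walk.cons ((adj_ustar E hy).symm) SimpleGraph.Walk.nil))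
    simpa using this

lemma dist_eq_two (E : Fin m → Set (Fin n)) {x y : GVert n m} (hne : x ≠ y)
    (hadj : ¬ (G E).Adj x y) : (G E).dist x y = 2 := by
  have h0 : (G E).dist x y ≠ 0 := by
    rw [SimpleGraph.dist_ne_zero_iff_ne_and_reachable]
    exact ⟨hne, reach E x y⟩
  have h1 : (G E).dist x y ≠ 1 := fun h => hadj (SimpleGraph.dist_eq_one_iff_adj.mp h)
  have h2 := dist_le_two E x y
  omega

/-- A vertex of `S` is trivially covered. -/
lemma self_cover {α : Type*} (G : SimpleGraph α) (z : α) : LiesOnShortestPath G z z z :=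
  ⟨SimpleGraph.Walk.nil, SimpleGraph.Walk.IsPath.nil, by simp [SimpleGraph.dist_self], by simp⟩

/-- A common neighbour of two vertices at distance 2 is covered. -/
lemma mid_cover {α : Type*} {G : SimpleGraph α} {x y z : α} (hxz : G.Adj x z) (hzy : G.Adj z y)
    (hd : G.dist x y = 2) : LiesOnShortestPath G x y z := by
  refine ⟨SimpleGraph.Walk.cons hxz (SimpleGraph.Walk.cons hzy SimpleGraph.Walk.nil), ?_, ?_, ?_⟩
  · have hxy : x ≠ y := fun h => by simp [h, SimpleGraph.dist_self] at hd
    simp [SimpleGraph.Walk.isPath_def, hxz.ne, hzy.ne, hxy]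
  · simp [hd]
  · simp

lemma support_short {α : Type*} {G : SimpleGraph α} {x y : α} (p : G.Walk x y)
    (hl : p.length ≤ 2) {z : α} (hz : z ∈ p.support) :
    z = x ∨ z = y ∨ (G.Adj x z ∧ G.Adj z y ∧ 2 ≤ p.length) := by
  match p with
  | .nil => simp at hz; exact Or.inl hz
  | .cons h .nil =>
      simp at hz
      rcases hz with h1 | h1
      · exact Or.inl h1
      · exact Or.inr (Or.inl h1)
  | .cons h (.cons h' .nil) =>
      simp at hz
      rcases hz with h1 | h1 | h1
      · exact Or.inl h1
      · subst h1
        refine Or.inr (Or.inr ⟨h, h', ?_⟩)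
        simp
      · exact Or.inr (Or.inl h1)
  | .cons _ (.cons _ (.cons _ _)) => simp at hl

/-- If `w ∉ S'` and no two distinct elements of `S'` are both adjacent to `w`, then
`S'` is not geodetic. -/
lemma not_geodetic (E : Fin m → Set (Fin n)) {S' : Set (GVert n m)} {w : GVert n m}
    (hw : w ∉ S')
    (huniq : ∀ x ∈ S', ∀ y ∈ S', (G E).Adj x w → (G E).Adj w y → x = y) :
    ¬ IsGeodeticSet (G E) S' := by
  intro hgeo
  obtain ⟨x, hx, y, hy, p, _, hlen, hsup⟩ := hgeo w
  have hle : p.length ≤ 2 := hlen ▸ dist_le_two E x y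
  rcases support_short p hle hsup with h | h | ⟨h1, h2, h3⟩
  · exact hw (h ▸ hx)
  · exact hw (h ▸ hy)
  · have hxy := huniq x hx y hy h1 h2
    subst hxy
    rw [SimpleGraph.dist_self] at hlen
    omega

/-- In the split graph `G` of the geodetic-set construction, the set `I ∪ {u}` is a minimal
geodetic set of `G` for every `u ∈ U`. -/
theorem Iset_union_u_minimal_geodetic
    (E : Fin m → Set (Fin n)) (hn : 1 ≤ n) (hm : 1 ≤ m)
    (hE : ∀ i : Fin n, ∃ j : Fin m, i ∉ E j)
    (j : Fin m) :
    IsMinimalGeodeticSet (G E) (Iset ∪ {GVert.u j}) := by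
  classical
  have hestar : GVert.estar ∈ (Iset ∪ {GVert.u j} : Set (GVert n m)) := Or.inl (Or.inr rfl)
  have huj : GVert.u j ∈ (Iset ∪ {GVert.u j} : Set (GVert n m)) := Or.inr rfl
  have he : ∀ k : Fin m, GVert.e k ∈ (Iset ∪ {GVert.u j} : Set (GVert n m)) :=
    fun k => Or.inl (Or.inl ⟨k, rfl⟩)
  constructor
  · -- geodetic
    intro z
    cases z with
    | v i =>
        refine ⟨.estar, hestar, .u j, huj, mid_cover ?_ ?_ (dist_eq_two E ?_ ?_)⟩
        · simp [G, SimpleGraph.fromRel_adj, baseRel]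
        · simp [G, SimpleGraph.fromRel_adj, baseRel]
        · simp
        · simp [G, SimpleGraph.fromRel_adj, baseRel]
    | e k => exact ⟨_, he k, _, he k, self_cover _ _⟩
    | u k =>
        by_cases hk : k = j
        · subst hk; exact ⟨_, huj, _, huj, self_cover _ _⟩
        · refine ⟨.e k, he k, .u j, huj, mid_cover ?_ ?_ (dist_eq_two E ?_ ?_)⟩
          · simp [G, SimpleGraph.fromRel_adj, baseRel]
          · simp [G, SimpleGraph.fromRel_adj, baseRel, hk]
          · simp
          · simp [G, SimpleGraph.fromRel_adj, baseRel]
            exact fun h => hk h.symm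
    | estar => exact ⟨_, hestar, _, hestar, self_cover _ _⟩
    | ustar =>
        refine ⟨.e j, he j, .estar, hestar, mid_cover ?_ ?_ (dist_eq_two E ?_ ?_)⟩
        · simp [G, SimpleGraph.fromRel_adj, baseRel]
        · simp [G, SimpleGraph.fromRel_adj, baseRel]
        · simp
        · simp [G, SimpleGraph.fromRel_adj, baseRel]
  · -- minimality
    intro S' hss
    have hsub : S' ⊆ Iset ∪ {GVert.u j} := hss.subset
    obtain ⟨s, hsS, hsS'⟩ := Set.exists_of_ssubset hss
    have hmem : ∀ x ∈ S', (∃ l, GVert.e l = x) ∨ x = GVert.estar ∨ x = GVert.u j := by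
      intro x hx
      have := hsub hx
      simp only [Set.mem_union, Iset, Set.mem_range, Set.mem_singleton_iff] at this
      tauto
    simp only [Set.mem_union, Iset, Set.mem_range, Set.mem_singleton_iff] at hsS
    rcases hsS with (⟨k, rfl⟩ | rfl) | rfl
    · -- s = e k : the vertex e k is no longer covered
      refine not_geodetic E hsS' ?_
      intro x hx y hy hxw hwy
      have hx' : x = GVert.u j := by
        rcases hmem x hx with ⟨l, rfl⟩ | rfl | rfl
        · simp [G, SimpleGraph.fromRel_adj, baseRel] at hxw
        · simp [G, SimpleGraph.fromRel_adj, baseRel] at hxw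
        · rfl
      have hy' : y = GVert.u j := by
        rcases hmem y hy with ⟨l, rfl⟩ | rfl | rfl
        · simp [G, SimpleGraph.fromRel_adj, baseRel] at hwy
        · simp [G, SimpleGraph.fromRel_adj, baseRel] at hwy
        · rfl
      rw [hx', hy']
    · -- s = e* : the vertex e* is no longer covered
      refine not_geodetic E hsS' ?_
      intro x hx y hy hxw hwy
      exfalso
      rcases hmem x hx with ⟨l, rfl⟩ | rfl | rfl
      · simp [G, SimpleGraph.fromRel_adj, baseRel] at hxw
      · exact hsS' hx
      · simp [G, SimpleGraph.fromRel_adj, baseRel] at hxw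
    · -- s = u j : the vertex u j is no longer covered
      refine not_geodetic E hsS' ?_
      intro x hx y hy hxw hwy
      have hx' : x = GVert.e j := by
        rcases hmem x hx with ⟨l, rfl⟩ | rfl | rfl
        · simp [G, SimpleGraph.fromRel_adj, baseRel] at hxw
          rw [hxw]
        · simp [G, SimpleGraph.fromRel_adj, baseRel] at hxw
        · exact absurd hx hsS'
      have hy' : y = GVert.e j := by
        rcases hmem y hy with ⟨l, rfl⟩ | rfl | rfl
        · simp [G, SimpleGraph.fromRel_adj, baseRel] at hwy
          rw [hwy]
        · simp [G, SimpleGraph.fromRel_adj, baseRel] at hwy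
        · exact absurd hy hsS'
      rw [hx', hy']


end GeoConstr
end

section
/- In the co-bipartite graph G of the geodetic extension construction, if T is a minimal transversal of 𝓗 containing A and avoiding B, then T ∪ {a,b,c} is a minimal geodetic set of G containing A' and avoiding B'. -/
namespace GeoExt

/-! ## The geodetic extension construction

Given a hypergraph `ℋ` with vertex set `{v_1, …, v_n}` (encoded as `Fin n`) and edge set
`E_1, …, E_m` (encoded as `E : Fin m → Set (Fin n)`), with `n, m ≥ 1` and such that the
full vertex set of `ℋ` is not a minimal transversal, and disjoint sets `A, B` of vertices
of `ℋ`, we build the co-bipartite graph `G` of the reduction from Ext-Trans-Enum to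
Ext-MinGeodetic.  Vertex `v_i` of the paper is `EVert.v ⟨i-1⟩` and `e_j` is
`EVert.e ⟨j-1⟩`. -/

inductive EVert (n m : ℕ) : Type
  | v : Fin n → EVert n m
  | e : Fin m → EVert n m
  | a : EVert n m
  | b : EVert n m
  | c : EVert n m

variable {n m : ℕ}

/-- The base (one-sided) adjacency relation of the construction; the graph is obtained by
symmetrizing it. -/
def baseRel (E : Fin m → Set (Fin n)) : EVert n m → EVert n m → Prop
  | .v _, .v _ => True      -- V is a clique
  | .e _, .e _ => True      -- H is a clique
  | .v i, .e j => i ∈ E j   -- incidence between V and H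
  | .a, .e _ => True        -- a is complete to H
  | .a, .b => True          -- b is adjacent to a
  | .a, .c => True          -- c is adjacent to a
  | .b, .v _ => True        -- b is complete to V
  | .c, .v _ => True        -- c is complete to H ∪ V
  | .c, .e _ => True
  | _, _ => False

/-- The co-bipartite graph `G` of the geodetic extension construction. -/
def G (E : Fin m → Set (Fin n)) : SimpleGraph (EVert n m) :=
  SimpleGraph.fromRel (baseRel E)

/-- `z` lies on some shortest `x`–`y` path in `G`. -/
def LiesOnShortestPath {α : Type*} (G : SimpleGraph α) (x y z : α) : Prop :=
  ∃ pth : G.Walk x y, pth.IsPath ∧ pth.length = G.dist x y ∧ z ∈ pth.support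

/-- `S` is a geodetic set of `G`: every vertex is covered by some pair of vertices of `S`. -/
def IsGeodeticSet {α : Type*} (G : SimpleGraph α) (S : Set α) : Prop :=
  ∀ z : α, ∃ x ∈ S, ∃ y ∈ S, LiesOnShortestPath G x y z

/-- `S` is an inclusion-wise minimal geodetic set of `G`. -/
def IsMinimalGeodeticSet {α : Type*} (G : SimpleGraph α) (S : Set α) : Prop :=
  IsGeodeticSet G S ∧ ∀ S' : Set α, S' ⊂ S → ¬ IsGeodeticSet G S'

/-- `T` is a transversal of the hypergraph with edges `E j`. -/
def IsTransversal (E : Fin m → Set (Fin n)) (T : Set (Fin n)) : Prop :=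
  ∀ j : Fin m, (T ∩ E j).Nonempty

/-- `T` is an inclusion-wise minimal transversal of the hypergraph with edges `E j`. -/
def IsMinimalTransversal (E : Fin m → Set (Fin n)) (T : Set (Fin n)) : Prop :=
  IsTransversal E T ∧ ∀ T' : Set (Fin n), T' ⊂ T → ¬ IsTransversal E T'

/-- The set `A' = A ∪ {a, b, c}`. -/
def Aset (A : Set (Fin n)) : Set (EVert n m) :=
  (EVert.v : Fin n → EVert n m) '' A ∪ {EVert.a, EVert.b, EVert.c}

/-- The set `B' = B ∪ H`. -/
def Bset (B : Set (Fin n)) : Set (EVert n m) :=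
  (EVert.v : Fin n → EVert n m) '' B ∪ Set.range (EVert.e : Fin m → EVert n m)


open SimpleGraph in
lemma lies_self {α : Type*} (G : SimpleGraph α) (x : α) : LiesOnShortestPath G x x x :=
  ⟨.nil, by simp, by simp [SimpleGraph.dist_self], by simp⟩

open SimpleGraph in
lemma lies_mid {α : Type*} {G : SimpleGraph α} {x w y : α}
    (h1 : G.Adj x w) (h2 : G.Adj w y) (h3 : ¬ G.Adj x y) (h4 : x ≠ y) :
    LiesOnShortestPath G x y w := by
  refine ⟨.cons h1 (.cons h2 .nil), ?_, ?_, by simp⟩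
  · simp [Walk.isPath_def, h4, h1.ne, h2.ne]
  · have hle : G.dist x y ≤ 2 := by
      have := SimpleGraph.dist_le (Walk.cons h1 (Walk.cons h2 Walk.nil))
      simpa using this
    have hpos : 0 < G.dist x y :=
      Reachable.pos_dist_of_ne ⟨Walk.cons h1 (Walk.cons h2 Walk.nil)⟩ h4
    have hne1 : G.dist x y ≠ 1 := fun h => h3 (SimpleGraph.dist_eq_one_iff_adj.mp h)
    simp only [Walk.length_cons, Walk.length_nil]
    omega

open SimpleGraph in
lemma cover_cases {α : Type*} {G : SimpleGraph α} {x y z : α}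
    (h : LiesOnShortestPath G x y z) (hd : G.dist x y ≤ 2) :
    z = x ∨ z = y ∨ (G.Adj x z ∧ G.Adj z y ∧ ¬ G.Adj x y ∧ x ≠ y) := by
  obtain ⟨p, hp, hlen, hz⟩ := h
  have hl2 : p.length ≤ 2 := hlen ▸ hd
  cases p with
  | nil => simp at hz; tauto
  | cons h1 q =>
    cases q with
    | nil => simp at hz; tauto
    | cons h2 q' =>
      cases q' with
      | nil =>
        have hd2 : G.dist x y = 2 := by simpa using hlen.symm
        have hnadj : ¬ G.Adj x y := by
          intro hadj
          have := SimpleGraph.dist_eq_one_iff_adj.mpr hadj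
          omega
        have hne : x ≠ y := by
          rintro rfl
          rw [SimpleGraph.dist_self] at hd2
          omega
        simp at hz
        rcases hz with rfl | rfl | rfl
        · tauto
        · exact Or.inr (Or.inr ⟨h1, h2, hnadj, hne⟩)
        · tauto
      | cons h3 q'' => simp at hl2

open SimpleGraph in
lemma dist_le_two (E : Fin m → Set (Fin n)) (x y : EVert n m) : (G E).dist x y ≤ 2 := by
  have h1 : ∀ {x y : EVert n m}, (G E).Adj x y → (G E).dist x y ≤ 2 := by
    intro x y h
    have := SimpleGraph.dist_le (Walk.cons h (Walk.nil : (G E).Walk y y))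
    simpa using Nat.le_trans this one_le_two
  have h2 : ∀ {x w y : EVert n m}, (G E).Adj x w → (G E).Adj w y → (G E).dist x y ≤ 2 := by
    intro x w y h h'
    have := SimpleGraph.dist_le (Walk.cons h (Walk.cons h' (Walk.nil : (G E).Walk y y)))
    simpa using this
  have h0 : ∀ x : EVert n m, (G E).dist x x ≤ 2 := by
    intro x; simp [SimpleGraph.dist_self]
  rcases x with i | j | _ | _ | _ <;> rcases y with i' | j' | _ | _ | _
  · by_cases hii : i = i'
    · subst hii; exact h0 _
    · exact h1 (by simp [G, baseRel, hii])
  · exact h2 (x := .v i) (w := .c) (by simp [G, baseRel]) (by simp [G, baseRel])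
  · exact h2 (x := .v i) (w := .b) (by simp [G, baseRel]) (by simp [G, baseRel])
  · exact h1 (by simp [G, baseRel])
  · exact h1 (by simp [G, baseRel])
  · exact h2 (x := .e j) (w := .c) (by simp [G, baseRel]) (by simp [G, baseRel])
  · by_cases hjj : j = j'
    · subst hjj; exact h0 _
    · exact h1 (by simp [G, baseRel, hjj])
  · exact h1 (by simp [G, baseRel])
  · exact h2 (x := .e j) (w := .a) (by simp [G, baseRel]) (by simp [G, baseRel])
  · exact h1 (by simp [G, baseRel])
  · exact h2 (x := .a) (w := .b) (by simp [G, baseRel]) (by simp [G, baseRel])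
  · exact h1 (by simp [G, baseRel])
  · exact h0 _
  · exact h1 (by simp [G, baseRel])
  · exact h1 (by simp [G, baseRel])
  · exact h1 (by simp [G, baseRel])
  · exact h2 (x := .b) (w := .a) (by simp [G, baseRel]) (by simp [G, baseRel])
  · exact h1 (by simp [G, baseRel])
  · exact h0 _
  · exact h2 (x := .b) (w := .a) (by simp [G, baseRel]) (by simp [G, baseRel])
  · exact h1 (by simp [G, baseRel])
  · exact h1 (by simp [G, baseRel])
  · exact h1 (by simp [G, baseRel])
  · exact h2 (x := .c) (w := .a) (by simp [G, baseRel]) (by simp [G, baseRel])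
  · exact h0 _

/-- In the co-bipartite graph `G` of the geodetic extension construction, if `T` is a
minimal transversal of `ℋ` containing `A` and avoiding `B`, then `T ∪ {a, b, c}` is a
minimal geodetic set of `G` containing `A'` and avoiding `B'`. -/
theorem transversal_gives_minimal_geodetic
    (E : Fin m → Set (Fin n)) (hn : 1 ≤ n) (hm : 1 ≤ m)
    (huniv : ¬ IsMinimalTransversal E (Set.univ : Set (Fin n)))
    (A B : Set (Fin n)) (hAB : A ∩ B = ∅)
    (T : Set (Fin n)) (hT : IsMinimalTransversal E T) (hTA : A ⊆ T) (hTB : T ∩ B = ∅) :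
    IsMinimalGeodeticSet (G E)
        ((EVert.v : Fin n → EVert n m) '' T ∪ {EVert.a, EVert.b, EVert.c}) ∧
      Aset A ⊆ (EVert.v : Fin n → EVert n m) '' T ∪ {EVert.a, EVert.b, EVert.c} ∧
      ((EVert.v : Fin n → EVert n m) '' T ∪ {EVert.a, EVert.b, EVert.c}) ∩ Bset B = ∅ := by
  classical
  have hmemS : ∀ x : EVert n m,
      x ∈ (EVert.v : Fin n → EVert n m) '' T ∪ {EVert.a, EVert.b, EVert.c} ↔
      (∃ k, k ∈ T ∧ EVert.v k = x) ∨ x = .a ∨ x = .b ∨ x = .c := by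
    intro x
    simp only [Set.mem_union, Set.mem_image, Set.mem_insert_iff, Set.mem_singleton_iff]
  have hbc : ¬ (G E).Adj .b .c := by simp [G, baseRel]
  have hgeoS : IsGeodeticSet (G E)
      ((EVert.v : Fin n → EVert n m) '' T ∪ {EVert.a, EVert.b, EVert.c}) := by
    intro z
    rcases z with i | j | _ | _ | _
    · exact ⟨.b, (hmemS _).mpr (Or.inr (Or.inr (Or.inl rfl))), .c,
        (hmemS _).mpr (Or.inr (Or.inr (Or.inr rfl))),
        lies_mid (by simp [G, baseRel]) (by simp [G, baseRel]) hbc (by simp)⟩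
    · obtain ⟨i, hiT, hiE⟩ := hT.1 j
      exact ⟨.v i, (hmemS _).mpr (Or.inl ⟨i, hiT, rfl⟩), .a, (hmemS _).mpr (Or.inr (Or.inl rfl)),
        lies_mid (by simp [G, baseRel, hiE]) (by simp [G, baseRel])
          (by simp [G, baseRel]) (by simp)⟩
    · exact ⟨.a, (hmemS _).mpr (Or.inr (Or.inl rfl)), .a,
        (hmemS _).mpr (Or.inr (Or.inl rfl)), lies_self _ _⟩
    · exact ⟨.b, (hmemS _).mpr (Or.inr (Or.inr (Or.inl rfl))), .b,
        (hmemS _).mpr (Or.inr (Or.inr (Or.inl rfl))), lies_self _ _⟩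
    · exact ⟨.c, (hmemS _).mpr (Or.inr (Or.inr (Or.inr rfl))), .c,
        (hmemS _).mpr (Or.inr (Or.inr (Or.inr rfl))), lies_self _ _⟩
  have hmin : ∀ S' : Set (EVert n m),
      S' ⊂ (EVert.v : Fin n → EVert n m) '' T ∪ {EVert.a, EVert.b, EVert.c} →
      ¬ IsGeodeticSet (G E) S' := by
    intro S' hS' hgeo
    have hsub : S' ⊆ _ := hS'.subset
    have hnsub := hS'.not_subset
    -- T is not the whole vertex set
    have hTn : ∃ i, i ∉ T := by
      by_contra h
      push_neg at h
      have hTu : T = Set.univ := Set.eq_univ_of_forall h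
      rw [hTu] at hT
      exact huniv hT
    obtain ⟨i0, hi0⟩ := hTn
    have hmem' : ∀ {x : EVert n m}, x ∈ S' →
        (∃ k, k ∈ T ∧ EVert.v k = x) ∨ x = .a ∨ x = .b ∨ x = .c :=
      fun hx => (hmemS _).mp (hsub hx)
    -- covering v i0 forces b and c in S'
    have hbc' : EVert.b ∈ S' ∧ EVert.c ∈ S' := by
      obtain ⟨x, hx, y, hy, hlies⟩ := hgeo (.v i0)
      rcases cover_cases hlies (dist_le_two E x y) with h | h | ⟨h1, h2, h3, h4⟩
      · exfalso
        subst h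
        rcases hmem' hx with ⟨k, hk, hk'⟩ | h' | h' | h'
        · rw [EVert.v.injEq] at hk'; exact hi0 (hk' ▸ hk)
        all_goals exact absurd h' (by simp)
      · exfalso
        subst h
        rcases hmem' hy with ⟨k, hk, hk'⟩ | h' | h' | h'
        · rw [EVert.v.injEq] at hk'; exact hi0 (hk' ▸ hk)
        all_goals exact absurd h' (by simp)
      · rcases hmem' hx with ⟨k, hk, rfl⟩ | rfl | rfl | rfl <;>
          rcases hmem' hy with ⟨l, hl, rfl⟩ | rfl | rfl | rfl <;>
          clear hlies hgeoS hS' hsub hnsub hgeo hmemS hmem' huniv hAB hTA hTB hT hbc hn hm <;>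
          first
            | exact ⟨hx, hy⟩
            | exact ⟨hy, hx⟩
            | (exfalso; simp_all [G, baseRel])
    -- covering e j forces a in S' and a transversal element of S'
    have hstepC : ∀ j : Fin m,
        (∃ k, k ∈ T ∧ k ∈ E j ∧ EVert.v k ∈ S') ∧ EVert.a ∈ S' := by
      intro j
      obtain ⟨x, hx, y, hy, hlies⟩ := hgeo (.e j)
      rcases cover_cases hlies (dist_le_two E x y) with h | h | ⟨h1, h2, h3, h4⟩
      · exfalso
        subst h
        rcases hmem' hx with ⟨k, hk, hk'⟩ | h' | h' | h'
        all_goals exact absurd ‹_› (by simp)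
      · exfalso
        subst h
        rcases hmem' hy with ⟨k, hk, hk'⟩ | h' | h' | h'
        all_goals exact absurd ‹_› (by simp)
      · rcases hmem' hx with ⟨k, hk, rfl⟩ | rfl | rfl | rfl <;>
          rcases hmem' hy with ⟨l, hl, rfl⟩ | rfl | rfl | rfl <;>
          clear hlies hgeoS hS' hsub hnsub hgeo hmemS hmem' huniv hAB hTA hTB hT hbc hbc' hn hm <;>
          first
            | (refine ⟨⟨k, hk, ?_, hx⟩, hy⟩; simpa [G, baseRel] using h1)
            | (refine ⟨⟨l, hl, ?_, hy⟩, hx⟩; simpa [G, baseRel] using h2)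
            | (exfalso; simp_all [G, baseRel])
    have haS' : EVert.a ∈ S' := (hstepC ⟨0, hm⟩).2
    have hvT : ∀ i ∈ T, EVert.v i ∈ S' := by
      set T' : Set (Fin n) := {i | i ∈ T ∧ EVert.v i ∈ S'} with hT'
      have hsubT : T' ⊆ T := fun i hi => hi.1
      have htrans : IsTransversal E T' := by
        intro j
        obtain ⟨⟨k, hk, hkE, hkS⟩, _⟩ := hstepC j
        exact ⟨k, ⟨hk, hkS⟩, hkE⟩
      rcases hsubT.ssubset_or_eq with hss | heq
      · exact absurd htrans (hT.2 T' hss)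
      · intro i hi
        have : i ∈ T' := by rw [heq]; exact hi
        exact this.2
    apply hnsub
    intro z hz
    rcases (hmemS _).mp hz with ⟨k, hk, rfl⟩ | rfl | rfl | rfl
    · exact hvT k hk
    · exact haS'
    · exact hbc'.1
    · exact hbc'.2
  refine ⟨⟨hgeoS, hmin⟩, ?_, ?_⟩
  · rintro x hx
    simp only [Aset, Set.mem_union, Set.mem_image] at hx
    rcases hx with ⟨k, hk, rfl⟩ | h
    · exact (hmemS _).mpr (Or.inl ⟨k, hTA hk, rfl⟩)
    · exact Set.mem_union_right _ h
  · rw [Set.eq_empty_iff_forall_notMem]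
    rintro x ⟨hx1, hx2⟩
    simp only [Bset, Set.mem_union, Set.mem_image, Set.mem_range] at hx2
    rcases (hmemS _).mp hx1 with ⟨k, hk, rfl⟩ | rfl | rfl | rfl <;>
      rcases hx2 with ⟨l, hl, h⟩ | ⟨j, h⟩
    · have hlk : l = k := by simpa using h
      subst hlk
      have : l ∈ T ∩ B := ⟨hk, hl⟩
      rw [hTB] at this
      exact this
    all_goals simp_all


end GeoExt
end
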